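/- Let G be any finite simple graph and let G₀ = G − N[core(G)] be the subgraph induced by the vertices lying outside the closed neighborhood of core(G). Then an edge e = xy of G is α-critical in G if and only if both endpoints of e lie in V(G₀) and e is an α-critical edge of G₀. -/

import Mathlib

/-!
Every maximum stable set contains `core G` and misses its neighbourhood, so
`α(G) = |core G| + α(G₀)`. If `xy` is α-critical, a stable set `S` of `G - xy` of size
`α(G) + 1` contains `x` and `y`, and `S - x`, `S - y` are maximum stable sets of `G`. The first
misses `x` and the second contains `x` together with the core, so `x ∉ N[core G]`; likewise `y`.
Deleting `xy` then does not change `N[core G]`, and the two inequalities behind the count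
(`|core| + α(H₀) ≤ α(H)`, and `|S| ≤ |core| + α(H₀)` for stable `S ⊇ core`) applied to
`H = G - xy`, `H₀ = G₀ - xy` transfer criticality in both directions.
-/

open scoped Classical

namespace KEG

variable {V : Type*}

/-- `S` is a stable (independent) set of vertices of `G`. -/
def IsStable (G : SimpleGraph V) (S : Finset V) : Prop :=
  ∀ ⦃x⦄, x ∈ S → ∀ ⦃y⦄, y ∈ S → ¬G.Adj x y

/-- The stability number `α(G)`: maximum cardinality of a stable set. -/
noncomputable def alphaNum (G : SimpleGraph V) : ℕ :=
  sSup {n | ∃ S : Finset V, IsStable G S ∧ S.card = n}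

/-- `S` is a maximum stable set of `G`. -/
def IsMaxStable (G : SimpleGraph V) (S : Finset V) : Prop :=
  IsStable G S ∧ S.card = alphaNum G

/-- `M` is a matching of `G`: a set of edges of `G`, pairwise non-incident. -/
def IsMatching (G : SimpleGraph V) (M : Finset (Sym2 V)) : Prop :=
  (∀ e ∈ M, e ∈ G.edgeSet) ∧
    ∀ e ∈ M, ∀ f ∈ M, e ≠ f → ∀ v : V, v ∈ e → v ∉ f

/-- The matching number `μ(G)`: maximum cardinality of a matching. -/
noncomputable def muNum (G : SimpleGraph V) : ℕ :=
  sSup {n | ∃ M : Finset (Sym2 V), IsMatching G M ∧ M.card = n}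

/-- A perfect matching: a matching covering every vertex. -/
def IsPerfectMatching (G : SimpleGraph V) (M : Finset (Sym2 V)) : Prop :=
  IsMatching G M ∧ ∀ v : V, ∃ e ∈ M, v ∈ e

/-- A maximal matching: a matching such that no edge of `G` can be added to it
while keeping pairwise non-incidence, i.e. every edge of `G` outside `M` is
incident to an edge of `M`. -/
def IsMaximalMatching (G : SimpleGraph V) (M : Finset (Sym2 V)) : Prop :=
  IsMatching G M ∧ ∀ e ∈ G.edgeSet, e ∉ M → ∃ f ∈ M, ∃ v : V, v ∈ e ∧ v ∈ f

/-- `G` is a König-Egerváry graph: `α(G) + μ(G) = |V(G)|`. -/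
def KonigEgervary (G : SimpleGraph V) [Fintype V] : Prop :=
  alphaNum G + muNum G = Fintype.card V

/-- `e` is an α-critical edge of `G`: `α(G - e) > α(G)`. -/
def IsAlphaCritical (G : SimpleGraph V) (e : Sym2 V) : Prop :=
  e ∈ G.edgeSet ∧ alphaNum G < alphaNum (G.deleteEdges {e})

/-- `e` is a μ-critical edge of `G`: `μ(G - e) < μ(G)`. -/
def IsMuCritical (G : SimpleGraph V) (e : Sym2 V) : Prop :=
  e ∈ G.edgeSet ∧ muNum (G.deleteEdges {e}) < muNum G

/-- `core(G)`: the set of vertices belonging to every maximum stable set of `G`. -/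
def core (G : SimpleGraph V) : Set V :=
  {v | ∀ S : Finset V, IsMaxStable G S → v ∈ S}

/-- `ξ(G) = |core(G)|`. -/
noncomputable def xi (G : SimpleGraph V) : ℕ := (core G).ncard

/-- `σ(G)`: the number of vertices belonging to no maximum stable set of `G`. -/
noncomputable def sigmaNum (G : SimpleGraph V) : ℕ :=
  {v : V | ∀ S : Finset V, IsMaxStable G S → v ∉ S}.ncard

/-- `η(G)`: the number of α-critical edges of `G`. -/
noncomputable def eta (G : SimpleGraph V) : ℕ :=
  {e : Sym2 V | IsAlphaCritical G e}.ncard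

/-- `N(A)`: the set of vertices adjacent to some vertex of `A`. -/
def nbhd (G : SimpleGraph V) (A : Set V) : Set V :=
  {v | ∃ a ∈ A, G.Adj a v}

/-- `N[A] = A ∪ N(A)`: the closed neighborhood of `A`. -/
def closedNbhd (G : SimpleGraph V) (A : Set V) : Set V :=
  A ∪ nbhd G A


section Stable

variable {G H : SimpleGraph V} {S T : Finset V}

lemma IsStable.subset (hT : IsStable G T) (hST : S ⊆ T) : IsStable G S :=
  fun _ hx _ hy => hT (hST hx) (hST hy)

lemma IsStable.anti (hS : IsStable G S) (hHG : H ≤ G) : IsStable H S :=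
  fun _ hx _ hy hxy => hS hx hy (hHG hxy)

lemma IsStable.of_deleteEdges {x y : V} (hS : IsStable (G.deleteEdges {s(x, y)}) S)
    (hx : x ∉ S) : IsStable G S := by
  intro u hu v hv huv
  refine hS hu hv (SimpleGraph.deleteEdges_adj.2 ⟨huv, ?_⟩)
  rintro h
  rcases Sym2.eq_iff.1 (Set.mem_singleton_iff.1 h) with ⟨rfl, -⟩ | ⟨-, rfl⟩
  exacts [hx hu, hx hv]

variable [Finite V]

lemma bddAbove_card_isStable (G : SimpleGraph V) :
    BddAbove {n | ∃ S : Finset V, IsStable G S ∧ S.card = n} := by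
  have := Fintype.ofFinite V
  exact ⟨Fintype.card V, by rintro n ⟨S, -, rfl⟩; exact S.card_le_univ⟩

lemma exists_isMaxStable (G : SimpleGraph V) : ∃ S : Finset V, IsMaxStable G S := by
  have h0 : 0 ∈ {n | ∃ S : Finset V, IsStable G S ∧ S.card = n} :=
    ⟨∅, fun _ h => absurd h (Finset.notMem_empty _), rfl⟩
  obtain ⟨S, hS, hSc⟩ := Nat.sSup_mem ⟨0, h0⟩ (bddAbove_card_isStable G)
  exact ⟨S, hS, hSc⟩

lemma IsStable.card_le_alphaNum (hS : IsStable G S) : S.card ≤ alphaNum G :=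
  le_csSup (bddAbove_card_isStable G) ⟨S, hS, rfl⟩

lemma alphaNum_lt_iff :
    alphaNum G < alphaNum H ↔ ∃ S : Finset V, IsStable H S ∧ S.card = alphaNum G + 1 := by
  constructor
  · intro h
    obtain ⟨S, hS, hSc⟩ := exists_isMaxStable H
    obtain ⟨T, hTS, hTc⟩ := S.exists_subset_card_eq (show alphaNum G + 1 ≤ S.card by omega)
    exact ⟨T, hS.subset hTS, hTc⟩
  · rintro ⟨S, hS, hSc⟩
    have := hS.card_le_alphaNum
    omega

end Stable

lemma isMaxStable_erase_of_isStable_deleteEdges [Finite V] {G : SimpleGraph V} {S : Finset V}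
    {x y : V} (hS : IsStable (G.deleteEdges {s(x, y)}) S) (hSc : S.card = alphaNum G + 1) :
    x ∈ S ∧ IsMaxStable G (S.erase x) := by
  have hxS : x ∈ S := by
    by_contra hxS
    have := (hS.of_deleteEdges hxS).card_le_alphaNum
    omega
  refine ⟨hxS, (hS.subset (S.erase_subset x)).of_deleteEdges (S.notMem_erase x), ?_⟩
  rw [Finset.card_erase_of_mem hxS]
  omega

lemma IsAlphaCritical.exists_isMaxStable_erase [Finite V] {G : SimpleGraph V} {x y : V}
    (h : IsAlphaCritical G s(x, y)) :
    ∃ S : Finset V, IsStable (G.deleteEdges {s(x, y)}) S ∧ S.card = alphaNum G + 1 ∧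
      x ∈ S.erase y ∧ y ∈ S.erase x ∧
      IsMaxStable G (S.erase x) ∧ IsMaxStable G (S.erase y) := by
  obtain ⟨S, hS, hSc⟩ := alphaNum_lt_iff.1 h.2
  obtain ⟨hxS, hSx⟩ := isMaxStable_erase_of_isStable_deleteEdges hS hSc
  obtain ⟨hyS, hSy⟩ := isMaxStable_erase_of_isStable_deleteEdges (Sym2.eq_swap ▸ hS) hSc
  have hne : x ≠ y := (G.mem_edgeSet.1 h.1).ne
  exact ⟨S, hS, hSc, Finset.mem_erase.2 ⟨hne, hxS⟩, Finset.mem_erase.2 ⟨hne.symm, hyS⟩,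
    hSx, hSy⟩

section DeleteEdge

variable {G : SimpleGraph V} {x y : V}

lemma closedNbhd_deleteEdges {A : Set V} (hx : x ∉ A) (hy : y ∉ A) :
    closedNbhd (G.deleteEdges {s(x, y)}) A = closedNbhd G A := by
  ext v
  simp only [closedNbhd, nbhd, Set.mem_union, Set.mem_ofPred_eq, SimpleGraph.deleteEdges_adj,
    Set.mem_singleton_iff, Sym2.eq_iff]
  constructor
  · rintro (hv | ⟨a, ha, hav, -⟩)
    exacts [Or.inl hv, Or.inr ⟨a, ha, hav⟩]
  · rintro (hv | ⟨a, ha, hav⟩)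
    · exact Or.inl hv
    · refine Or.inr ⟨a, ha, hav, ?_⟩
      rintro (⟨rfl, -⟩ | ⟨rfl, -⟩)
      exacts [hx ha, hy ha]

lemma induce_deleteEdges {W : Set V} (hx : x ∈ W) (hy : y ∈ W) :
    (G.deleteEdges {s(x, y)}).induce W =
      (G.induce W).deleteEdges {s((⟨x, hx⟩ : W), (⟨y, hy⟩ : W))} := by
  ext a b
  simp [Subtype.ext_iff]

end DeleteEdge

section ClosedNbhd

variable [Finite V] {H : SimpleGraph V} {A : Finset V}

lemma card_add_alphaNum_induce_le (hA : IsStable H A) :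
    A.card + alphaNum (H.induce (closedNbhd H A)ᶜ) ≤ alphaNum H := by
  obtain ⟨T, hT, hTc⟩ := exists_isMaxStable (H.induce (closedNbhd H A)ᶜ)
  have hdisj : Disjoint A (T.map (Function.Embedding.subtype _)) := by
    refine Finset.disjoint_left.2 fun v hvA hvT => ?_
    obtain ⟨w, -, rfl⟩ := Finset.mem_map.1 hvT
    exact w.2 (Or.inl hvA)
  have hstab : IsStable H (A ∪ T.map (Function.Embedding.subtype _)) := by
    intro u hu v hv huv
    simp only [Finset.mem_union, Finset.mem_map, Function.Embedding.coe_subtype] at hu hv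
    rcases hu with hu | ⟨u, hu, rfl⟩ <;> rcases hv with hv | ⟨v, hv, rfl⟩
    · exact hA hu hv huv
    · exact v.2 (Or.inr ⟨u, hu, huv⟩)
    · exact u.2 (Or.inr ⟨v, hv, huv.symm⟩)
    · exact hT hu hv huv
  have := hstab.card_le_alphaNum
  rwa [Finset.card_union_of_disjoint hdisj, Finset.card_map, hTc] at this

lemma card_le_card_add_alphaNum_induce {S : Finset V} (hS : IsStable H S) (hAS : A ⊆ S) :
    S.card ≤ A.card + alphaNum (H.induce (closedNbhd H A)ᶜ) := by
  have hout : ∀ v ∈ S \ A, v ∈ (closedNbhd H A)ᶜ := by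
    rintro v hv (hvA | ⟨a, ha, hav⟩)
    · exact (Finset.mem_sdiff.1 hv).2 hvA
    · exact hS (hAS ha) (Finset.mem_sdiff.1 hv).1 hav
  set T := (S \ A).subtype (· ∈ (closedNbhd H A)ᶜ)
  have hT : IsStable (H.induce (closedNbhd H A)ᶜ) T := fun u hu v hv =>
    hS (Finset.mem_sdiff.1 (Finset.mem_subtype.1 hu)).1
      (Finset.mem_sdiff.1 (Finset.mem_subtype.1 hv)).1
  have hTc : T.card = S.card - A.card := by
    rw [Finset.card_subtype, Finset.filter_true_of_mem hout, Finset.card_sdiff_of_subset hAS]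
  have := hT.card_le_alphaNum
  have := Finset.card_le_card hAS
  omega

end ClosedNbhd

section Core

variable {G : SimpleGraph V}

lemma notMem_closedNbhd_core {v : V} {M₁ M₂ : Finset V}
    (h₁ : IsMaxStable G M₁) (hv₁ : v ∉ M₁) (h₂ : IsMaxStable G M₂) (hv₂ : v ∈ M₂) :
    v ∉ closedNbhd G (core G) := by
  rintro (hv | ⟨c, hc, hcv⟩)
  · exact hv₁ (hv M₁ h₁)
  · exact h₂.1 (hc M₂ h₂) hv₂ hcv

variable [Fintype V]

lemma toFinset_core_subset {S : Finset V} (hS : IsMaxStable G S) : (core G).toFinset ⊆ S :=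
  fun _ hv => Set.mem_toFinset.1 hv S hS

variable (G)

lemma isStable_toFinset_core : IsStable G (core G).toFinset := by
  obtain ⟨S, hS⟩ := exists_isMaxStable G
  exact hS.1.subset (toFinset_core_subset hS)

lemma alphaNum_eq_card_core_add :
    alphaNum G = (core G).toFinset.card + alphaNum (G.induce (closedNbhd G (core G))ᶜ) := by
  obtain ⟨S, hS⟩ := exists_isMaxStable G
  have hle := card_add_alphaNum_induce_le (isStable_toFinset_core G)
  have hge := card_le_card_add_alphaNum_induce hS.1 (toFinset_core_subset hS)
  rw [Set.coe_toFinset] at hle hge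
  have := hS.2
  omega

end Core

theorem stmt_13_general {V : Type*} [Fintype V] (G : SimpleGraph V)
    (W : Set V) (hW : W = (closedNbhd G (core G))ᶜ)
    (x y : V) :
    IsAlphaCritical G s(x, y) ↔
      ∃ (hx : x ∈ W) (hy : y ∈ W),
        IsAlphaCritical (G.induce W) s((⟨x, hx⟩ : ↥W), (⟨y, hy⟩ : ↥W)) := by
  subst hW
  have hα := alphaNum_eq_card_core_add G
  constructor
  · intro h
    obtain ⟨S, hS, hSc, hxS, hyS, hSx, hSy⟩ := h.exists_isMaxStable_erase
    have hx := notMem_closedNbhd_core hSx (S.notMem_erase x) hSy hxS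
    have hy := notMem_closedNbhd_core hSy (S.notMem_erase y) hSx hyS
    refine ⟨hx, hy, h.1, ?_⟩
    have hle := card_le_card_add_alphaNum_induce hS
      ((toFinset_core_subset hSx).trans (S.erase_subset x))
    rw [Set.coe_toFinset, closedNbhd_deleteEdges (fun h => hx (Or.inl h))
      (fun h => hy (Or.inl h)), induce_deleteEdges hx hy] at hle
    omega
  · rintro ⟨hx, hy, he, hlt⟩
    refine ⟨he, ?_⟩
    have hle := card_add_alphaNum_induce_le
      ((isStable_toFinset_core G).anti (G.deleteEdges_le {s(x, y)}))
    rw [Set.coe_toFinset, closedNbhd_deleteEdges (fun h => hx (Or.inl h))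
      (fun h => hy (Or.inl h)), induce_deleteEdges hx hy] at hle
    omega

/-- An edge `xy` of `G` is α-critical in `G` iff both its endpoints lie outside
`N[core(G)]` and it is an α-critical edge of the induced subgraph
`G₀ = G - N[core(G)]`. -/
theorem stmt_13 {V : Type*} [Fintype V] (G : SimpleGraph V)
    (W : Set V) (hW : W = (closedNbhd G (core G))ᶜ)
    (x y : V) (hxy : G.Adj x y) :
    IsAlphaCritical G s(x, y) ↔
      ∃ (hx : x ∈ W) (hy : y ∈ W),
        IsAlphaCritical (G.induce W) s((⟨x, hx⟩ : ↥W), (⟨y, hy⟩ : ↥W)) :=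
  stmt_13_general G W hW x y

end KEG
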